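/- Fix an integer N ≥ 2 and real numbers μ_i[0] > 0 for 0 ≤ i ≤ N−1, and let the sequences μ_i : ℕ → (0,∞) be determined by the recursion μ_i[n+1] = μ_i[n]·exp( 2·Σ_{j=0}^{i−1} μ_j[n+1] ). Then for every i with 1 ≤ i ≤ N−1, μ_i[n] → +∞ as n → ∞. -/

import Mathlib

/-!
The first beam never gains energy, so `μ 0` is constant. Every later beam `i ≥ 1` has
`μ 0` among the summands of its exponent, hence is multiplied at each step by at least
`exp (2 μ₀[0]) > 1` and grows geometrically.
-/

/-- The recursive system modelling the energy exchange between `N` spherically symmetric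
Vlasov beams: `μ_i[n+1] = μ_i[n]·exp(2·Σ_{j=0}^{i−1} μ_j[n+1])` for `0 ≤ i ≤ N−1`
(the empty sum being `0` for `i = 0`). -/
def MuRec (N : ℕ) (μ : ℕ → ℕ → ℝ) : Prop :=
  ∀ i < N, ∀ n : ℕ,
    μ i (n + 1) = μ i n * Real.exp (2 * ∑ j ∈ Finset.range i, μ j (n + 1))

open Filter Finset

namespace MuRec

variable {N : ℕ} {μ : ℕ → ℕ → ℝ}

theorem apply_zero_eq (hrec : MuRec N μ) (hN : 0 < N) (n : ℕ) : μ 0 n = μ 0 0 := by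
  induction n with
  | zero => rfl
  | succ n ih => simp [hrec 0 hN n, ih]

theorem exp_mul_le_apply_succ (hrec : MuRec N μ) (hpos : ∀ i < N, ∀ n, 0 < μ i n)
    {i : ℕ} (hi : 1 ≤ i) (hiN : i < N) (n : ℕ) :
    Real.exp (2 * μ 0 0) * μ i n ≤ μ i (n + 1) := by
  have hsum : μ 0 0 ≤ ∑ j ∈ range i, μ j (n + 1) := by
    rw [← hrec.apply_zero_eq (by omega) (n + 1)]
    exact single_le_sum (fun j hj => (hpos j (by grind) (n + 1)).le)
      (mem_range.mpr (by omega))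
  rw [hrec i hiN n, mul_comm]
  gcongr
  exact (hpos i hiN n).le

end MuRec

theorem mu_system_tendsto_atTop_general (N : ℕ) (μ : ℕ → ℕ → ℝ)
    (hpos : ∀ i < N, ∀ n : ℕ, 0 < μ i n)
    (hrec : MuRec N μ) :
    ∀ i, 1 ≤ i → i < N →
      Filter.Tendsto (fun n => μ i n) Filter.atTop Filter.atTop := by
  intro i hi hiN
  exact tendsto_atTop_of_geom_le (hpos i hiN 0)
    (Real.one_lt_exp_iff.mpr (by linarith [hpos 0 (by omega) 0]))
    (hrec.exp_mul_le_apply_succ hpos hi hiN)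

/-- **Blow-up of the beam-interaction recursion.** For `N ≥ 2` and positive data, every
sequence `μ_i[n]` with `1 ≤ i ≤ N−1` tends to `+∞` as `n → ∞`. -/
theorem mu_system_tendsto_atTop (N : ℕ) (hN : 2 ≤ N) (μ : ℕ → ℕ → ℝ)
    (hpos : ∀ i < N, ∀ n : ℕ, 0 < μ i n) (hμ0 : ∀ i < N, 0 < μ i 0)
    (hrec : MuRec N μ) :
    ∀ i, 1 ≤ i → i < N →
      Filter.Tendsto (fun n => μ i n) Filter.atTop Filter.atTop :=
  mu_system_tendsto_atTop_general N μ hpos hrec
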